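/- If (G, p) is a framework in ℝ^d admitting an equilibrium stress ω whose stress matrix Ω(ω) is positive semidefinite of rank n − d − 1, and q is any configuration in ℝ^D equivalent to p (same edge lengths), then ω is also an equilibrium stress for (G, q). -/

import Mathlib

/-- The stress matrix of a stress `ω`: off-diagonal entries `−ω i j`, diagonal entries
`∑ j, ω i j`. -/
def stressMatrix {n : ℕ} (ω : Fin n → Fin n → ℝ) : Matrix (Fin n) (Fin n) ℝ :=
  Matrix.of fun i j => if i = j then ∑ k, ω i k else -ω i j

/-!
The energy `E(r) = ∑ i, ∑ j, ω i j * ‖r i - r j‖²` of a configuration `r` is twice the sum, over the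
coordinates `k`, of the quadratic forms `rₖ ⬝ Ω rₖ` of the coordinate vectors. When `Ω` is positive
semidefinite, `E(r) = 0` therefore holds exactly when every coordinate vector lies in `ker Ω`, that
is, when `ω` is an equilibrium stress for `r`. So `E(p) = 0`; and as `ω` is supported on the edges,
`E` depends only on edge lengths, whence `E(q) = E(p) = 0`.
-/

open Matrix

section StressMatrix

variable {n : ℕ} {ω : Fin n → Fin n → ℝ}

theorem stressMatrix_mulVec_apply (hdiag : ∀ i, ω i i = 0) (x : Fin n → ℝ) (i : Fin n) :
    (stressMatrix ω *ᵥ x) i = ∑ j, ω i j * (x i - x j) := by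
  have hterm : ∀ j, (if i = j then ∑ k, ω i k else -ω i j) * x j
      = (if i = j then (∑ k, ω i k) * x i else 0) - ω i j * x j := by
    intro j
    by_cases h : i = j
    · subst h; simp [hdiag i]
    · simp [h]
  simp only [mulVec, dotProduct, stressMatrix, of_apply, hterm, Finset.sum_sub_distrib,
    Finset.sum_ite_eq, Finset.mem_univ, if_true, mul_sub, Finset.sum_mul]

theorem stressMatrix_dotProduct_mulVec_self (hsym : ∀ i j, ω i j = ω j i) (hdiag : ∀ i, ω i i = 0)
    (x : Fin n → ℝ) :
    x ⬝ᵥ stressMatrix ω *ᵥ x = (∑ i, ∑ j, ω i j * (x i - x j) ^ 2) / 2 := by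
  have hform : x ⬝ᵥ stressMatrix ω *ᵥ x = ∑ i, ∑ j, ω i j * (x i * (x i - x j)) := by
    simp only [dotProduct, stressMatrix_mulVec_apply hdiag, Finset.mul_sum]
    exact Finset.sum_congr rfl fun i _ => Finset.sum_congr rfl fun j _ => by ring
  have hswap : ∑ i, ∑ j, ω i j * (x j * (x j - x i)) = ∑ i, ∑ j, ω i j * (x i * (x i - x j)) := by
    rw [Finset.sum_comm]
    exact Finset.sum_congr rfl fun i _ => Finset.sum_congr rfl fun j _ => by rw [hsym]
  have hsplit : ∑ i, ∑ j, ω i j * (x i - x j) ^ 2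
      = ∑ i, ∑ j, ω i j * (x i * (x i - x j)) + ∑ i, ∑ j, ω i j * (x j * (x j - x i)) := by
    simp only [← Finset.sum_add_distrib]
    exact Finset.sum_congr rfl fun i _ => Finset.sum_congr rfl fun j _ => by ring
  linarith

end StressMatrix

section Configuration

variable {n : ℕ} {ι : Type*} {ω : Fin n → Fin n → ℝ}

theorem stressMatrix_mulVec_coord (hdiag : ∀ i, ω i i = 0) (r : Fin n → EuclideanSpace ℝ ι)
    (k : ι) (i : Fin n) :
    (stressMatrix ω *ᵥ fun l => r l k) i = (∑ j, ω i j • (r i - r j)) k := by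
  simp [stressMatrix_mulVec_apply hdiag]

variable [Fintype ι]

noncomputable def stressEnergy (ω : Fin n → Fin n → ℝ) (r : Fin n → EuclideanSpace ℝ ι) : ℝ :=
  ∑ i, ∑ j, ω i j * dist (r i) (r j) ^ 2

theorem stressEnergy_eq_two_mul_sum_coord (hsym : ∀ i j, ω i j = ω j i)
    (hdiag : ∀ i, ω i i = 0) (r : Fin n → EuclideanSpace ℝ ι) :
    stressEnergy ω r = 2 * ∑ k, (fun i => r i k) ⬝ᵥ stressMatrix ω *ᵥ fun i => r i k := by
  simp only [stressMatrix_dotProduct_mulVec_self hsym hdiag, ← Finset.sum_div,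
    mul_div_cancel₀ _ (two_ne_zero (α := ℝ)), stressEnergy, EuclideanSpace.dist_sq_eq,
    Real.dist_eq, sq_abs, Finset.mul_sum]
  exact (Finset.sum_congr rfl fun _ _ => Finset.sum_comm).trans Finset.sum_comm

theorem stressEnergy_eq_zero_iff (hsym : ∀ i j, ω i j = ω j i) (hdiag : ∀ i, ω i i = 0)
    (hpsd : (stressMatrix ω).PosSemidef) (r : Fin n → EuclideanSpace ℝ ι) :
    stressEnergy ω r = 0 ↔ ∀ i, ∑ j, ω i j • (r i - r j) = 0 := by
  have hnonneg : ∀ k, 0 ≤ (fun i => r i k) ⬝ᵥ stressMatrix ω *ᵥ fun i => r i k := fun k => by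
    simpa using hpsd.dotProduct_mulVec_nonneg fun i => r i k
  have hkernel : ∀ k, (fun i => r i k) ⬝ᵥ stressMatrix ω *ᵥ (fun i => r i k) = 0 ↔
      stressMatrix ω *ᵥ (fun i => r i k) = 0 := fun k => by
    simpa using hpsd.dotProduct_mulVec_zero_iff fun i => r i k
  have hequil : (∀ i, ∑ j, ω i j • (r i - r j) = 0) ↔
      ∀ k, stressMatrix ω *ᵥ (fun i => r i k) = 0 := by
    simp only [funext_iff, stressMatrix_mulVec_coord hdiag, Pi.zero_apply, PiLp.ext_iff,
      PiLp.zero_apply]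
    exact forall_comm
  rw [stressEnergy_eq_two_mul_sum_coord hsym hdiag, mul_eq_zero, or_iff_right two_ne_zero,
    Finset.sum_eq_zero_iff_of_nonneg fun k _ => hnonneg k, hequil]
  simp only [Finset.mem_univ, true_implies, hkernel]

theorem stressEnergy_eq_of_dist_eq {m : Type*} [Fintype m] {G : SimpleGraph (Fin n)}
    (hsupp : ∀ i j, ¬ G.Adj i j → ω i j = 0) {r : Fin n → EuclideanSpace ℝ ι}
    {s : Fin n → EuclideanSpace ℝ m}
    (hdist : ∀ i j, G.Adj i j → dist (r i) (r j) = dist (s i) (s j)) :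
    stressEnergy ω r = stressEnergy ω s := by
  refine Finset.sum_congr rfl fun i _ => Finset.sum_congr rfl fun j _ => ?_
  by_cases h : G.Adj i j
  · rw [hdist i j h]
  · simp [hsupp i j h]

end Configuration

theorem equilibrium_stress_of_equivalent_general {n d D : ℕ} (G : SimpleGraph (Fin n))
    (p : Fin n → EuclideanSpace ℝ (Fin d)) (q : Fin n → EuclideanSpace ℝ (Fin D))
    (ω : Fin n → Fin n → ℝ)
    (hsym : ∀ i j, ω i j = ω j i) (hsupp : ∀ i j, ¬ G.Adj i j → ω i j = 0)
    (hequil : ∀ i, ∑ j, ω i j • (p i - p j) = 0)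
    (hpsd : (stressMatrix ω).PosSemidef)
    (hequiv : ∀ i j, G.Adj i j → dist (q i) (q j) = dist (p i) (p j)) :
    ∀ i, ∑ j, ω i j • (q i - q j) = 0 := by
  have hdiag : ∀ i, ω i i = 0 := fun i => hsupp i i G.irrefl
  rw [← stressEnergy_eq_zero_iff hsym hdiag hpsd, stressEnergy_eq_of_dist_eq hsupp hequiv]
  exact (stressEnergy_eq_zero_iff hsym hdiag hpsd p).mpr hequil

/-- If `(G, p)` in `ℝ^d` has an equilibrium stress `ω` whose stress matrix is positive
semidefinite of rank `n − d − 1`, then `ω` is also an equilibrium stress for any configuration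
`q` in `ℝ^D` with the same edge lengths. -/
theorem equilibrium_stress_of_equivalent {n d D : ℕ} (G : SimpleGraph (Fin n))
    (p : Fin n → EuclideanSpace ℝ (Fin d)) (q : Fin n → EuclideanSpace ℝ (Fin D))
    (ω : Fin n → Fin n → ℝ)
    (hsym : ∀ i j, ω i j = ω j i) (hsupp : ∀ i j, ¬ G.Adj i j → ω i j = 0)
    (hequil : ∀ i, ∑ j, ω i j • (p i - p j) = 0)
    (hpsd : (stressMatrix ω).PosSemidef)
    (hrank : (stressMatrix ω).rank = n - d - 1)
    (hequiv : ∀ i j, G.Adj i j → dist (q i) (q j) = dist (p i) (p j)) :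
    ∀ i, ∑ j, ω i j • (q i - q j) = 0 :=
  equilibrium_stress_of_equivalent_general G p q ω hsym hsupp hequil hpsd hequiv
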